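/- arXiv:2502.09724 — 5 statements merged into one kernel-verified Lean document; each statement's English description precedes it below -/
import Mathlib

section
/- Let N ≥ 2 be an integer, let x ∈ ℝ^N have strictly positive entries, let α ∈ (0, 1), and set p₀ = − (ln N)/(ln(1/α)). Then for every real p ≤ p₀ (note p < 0), the minimum entry approximates the p-mean within factor α: min_{i ∈ [N]} x_i ≥ α · ((1/N)·∑_{i=1}^N x_i^p)^{1/p}. -/
open Real BigOperators Finset

/-- Generalized `p`-mean of a vector `x ∈ ℝ^N` for nonzero real exponent `p`. -/
noncomputable def pmean {N : ℕ} (x : Fin N → ℝ) (p : ℝ) : ℝ :=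
  ((1 / N : ℝ) * ∑ i, x i ^ p) ^ (1 / p)

/-- For `p₀ = -(ln N)/(ln (1/α))`, the minimum entry of `x` is an `α`-approximation
of the `p`-mean of `x` for every `p ≤ p₀`. -/
theorem min_approximates_pmean {N : ℕ} (hN : 2 ≤ N) (x : Fin N → ℝ)
    (hx : ∀ i, 0 < x i) (α : ℝ) (hα : α ∈ Set.Ioo (0 : ℝ) 1)
    (p₀ : ℝ) (hp₀ : p₀ = -(Real.log N / Real.log (1 / α)))
    (p : ℝ) (hp : p ≤ p₀) :
    α * pmean x p ≤ Finset.univ.inf' ⟨⟨0, by omega⟩, Finset.mem_univ _⟩ x := by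
  obtain ⟨hα0, hα1⟩ := hα
  set m := Finset.univ.inf' ⟨⟨0, by omega⟩, Finset.mem_univ _⟩ x with hm
  have hN0 : (0:ℝ) < N := by positivity
  have hN1 : (1:ℝ) < N := by exact_mod_cast (by omega : 1 < N)
  have hlogN : 0 < Real.log N := Real.log_pos hN1
  have hlogα : Real.log α < 0 := Real.log_neg hα0 hα1
  have hp0' : p₀ = Real.log N / Real.log α := by
    rw [hp₀, Real.log_div one_ne_zero (ne_of_gt hα0), Real.log_one]
    ring
  have hpneg : p < 0 := by
    have : p₀ < 0 := by
      rw [hp0']; exact div_neg_of_pos_of_neg hlogN hlogα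
    linarith
  obtain ⟨j, -, hj⟩ := Finset.exists_mem_eq_inf' ⟨⟨0, by omega⟩, Finset.mem_univ _⟩ x
  have hmj : m = x j := hj
  have hmpos : 0 < m := by rw [hmj]; exact hx j
  have hmle : ∀ i, m ≤ x i := fun i => Finset.inf'_le _ (Finset.mem_univ i)
  -- sum lower bound
  have hsum : m ^ p ≤ ∑ i, x i ^ p := by
    rw [hmj]
    exact Finset.single_le_sum (f := fun i => x i ^ p)
      (fun i _ => (Real.rpow_pos_of_pos (hx i) p).le) (Finset.mem_univ j)
  have hmean_pos : (0:ℝ) < (1 / N : ℝ) * ∑ i, x i ^ p := by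
    have : (0:ℝ) < ∑ i, x i ^ p :=
      lt_of_lt_of_le (Real.rpow_pos_of_pos hmpos p) hsum
    positivity
  have hkey : m ^ p / N ≤ (1 / N : ℝ) * ∑ i, x i ^ p := by
    rw [div_eq_mul_inv, mul_comm, one_div]
    exact mul_le_mul_of_nonneg_left hsum (by positivity)
  -- pmean ≤ (m^p / N)^(1/p)
  have h1 : pmean x p ≤ (m ^ p / N) ^ (1/p) := by
    unfold pmean
    exact Real.rpow_le_rpow_of_nonpos (by positivity) hkey
      (le_of_lt (by exact one_div_neg.mpr hpneg))
  have h2 : (m ^ p / N : ℝ) ^ (1/p) = m * (N:ℝ) ^ (-(1/p)) := by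
    rw [Real.div_rpow (Real.rpow_pos_of_pos hmpos p).le hN0.le,
      ← Real.rpow_mul hmpos.le, mul_one_div, div_self hpneg.ne,
      Real.rpow_one, Real.rpow_neg hN0.le, div_eq_mul_inv]
  have h3 : α * (N:ℝ) ^ (-(1/p)) ≤ 1 := by
    have hα' : α = Real.exp (Real.log α) := (Real.exp_log hα0).symm
    have hNe : (N:ℝ) ^ (-(1/p)) = Real.exp (-(1/p) * Real.log N) := by
      rw [Real.rpow_def_of_pos hN0, mul_comm]
    have hexp : Real.log α + (-(1/p)) * Real.log N ≤ 0 := by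
      have hple : p ≤ Real.log N / Real.log α := hp0' ▸ hp
      have h4 : Real.log N ≤ p * Real.log α := by
        rw [le_div_iff_of_neg hlogα] at hple; linarith
      have h5 : Real.log N / p ≥ Real.log α := by
        rw [ge_iff_le, le_div_iff_of_neg hpneg]; linarith [h4]
      have : -(1/p) * Real.log N = -(Real.log N / p) := by ring
      rw [this]; linarith
    calc α * (N:ℝ) ^ (-(1/p))
        = Real.exp (Real.log α + (-(1/p)) * Real.log N) := by
          rw [Real.exp_add, ← hα', hNe]
      _ ≤ Real.exp 0 := Real.exp_le_exp.mpr hexp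
      _ = 1 := Real.exp_zero
  calc α * pmean x p ≤ α * ((m ^ p / N) ^ (1/p)) :=
        mul_le_mul_of_nonneg_left h1 hα0.le
    _ = (α * (N:ℝ) ^ (-(1/p))) * m := by rw [h2]; ring
    _ ≤ 1 * m := mul_le_mul_of_nonneg_right h3 hmpos.le
    _ = m := one_mul m
end

section
/- Let N ≥ 2 be an integer, let x_1, …, x_M ∈ ℝ^N (M ≥ 1) be vectors with strictly positive entries, let α ∈ (0, 1), and set p₀ = − (ln N)/(ln(1/α)). Let j₀ ∈ {1, …, M} be an index maximizing f(x_j, p₀) over j ∈ {1, …, M}, where f(x, p) = ((1/N)·∑_{i=1}^N x_i^p)^{1/p}. Then for every real p ≤ p₀ one has f(x_{j₀}, p) ≥ α · max_{j ∈ {1,…,M}} f(x_j, p); that is, the maximizer at p₀ is an α-approximate maximizer of the p-mean objective simultaneously for all p ≤ p₀. -/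
open Real BigOperators Finset

lemma mean_rpow_pos {N : ℕ} (hN : 0 < N) {x : Fin N → ℝ} (hx : ∀ i, 0 < x i) (p : ℝ) :
    0 < (1 / N : ℝ) * ∑ i, x i ^ p := by
  have : Nonempty (Fin N) := ⟨⟨0, hN⟩⟩
  have := Finset.sum_pos (fun i _ => rpow_pos_of_pos (hx i) p) univ_nonempty
  positivity

lemma pmean_le_pmean_of_neg {N : ℕ} (hN : 0 < N) {x : Fin N → ℝ} (hx : ∀ i, 0 < x i)
    {p q : ℝ} (hq : q < 0) (hpq : p ≤ q) : pmean x p ≤ pmean x q := by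
  have hp : p < 0 := hpq.trans_lt hq
  have hr : 1 ≤ p / q := (one_le_div_of_neg hq).2 hpq
  have hjensen : ((1 / N : ℝ) * ∑ i, x i ^ q) ^ (p / q) ≤ (1 / N : ℝ) * ∑ i, x i ^ p := by
    have hw : ∑ _i : Fin N, (1 / N : ℝ) = 1 := by simp [hN.ne']
    calc ((1 / N : ℝ) * ∑ i, x i ^ q) ^ (p / q)
        = (∑ i, (1 / N : ℝ) * x i ^ q) ^ (p / q) := by rw [mul_sum]
      _ ≤ ∑ i, (1 / N : ℝ) * (x i ^ q) ^ (p / q) :=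
          rpow_arith_mean_le_arith_mean_rpow univ _ _ (fun _ _ => by positivity) hw
            (fun i _ => (rpow_pos_of_pos (hx i) q).le) hr
      _ = (1 / N : ℝ) * ∑ i, x i ^ p := by
          simp only [← rpow_mul (hx _).le, mul_div_cancel₀ p hq.ne, mul_sum]
  calc pmean x p ≤ (((1 / N : ℝ) * ∑ i, x i ^ q) ^ (p / q)) ^ (1 / p) :=
        rpow_le_rpow_of_nonpos (rpow_pos_of_pos (mean_rpow_pos hN hx q) _) hjensen
          (one_div_nonpos.mpr hp.le)
    _ = pmean x q := by
        rw [← rpow_mul (mean_rpow_pos hN hx q).le]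
        congr 1
        field_simp [hp.ne]

lemma le_pmean_of_forall_le {N : ℕ} (hN : 0 < N) {x : Fin N → ℝ} {m q : ℝ} (hm : 0 < m)
    (hmx : ∀ i, m ≤ x i) (hq : q < 0) : m ≤ pmean x q := by
  have hmean : (1 / N : ℝ) * ∑ i, x i ^ q ≤ m ^ q := by
    calc (1 / N : ℝ) * ∑ i, x i ^ q ≤ (1 / N : ℝ) * ∑ _i : Fin N, m ^ q :=
          mul_le_mul_of_nonneg_left
            (sum_le_sum fun i _ => rpow_le_rpow_of_nonpos hm (hmx i) hq.le) (by positivity)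
      _ = m ^ q := by simp [hN.ne']
  calc m = (m ^ q) ^ (1 / q) := by rw [← rpow_mul hm.le, mul_one_div_cancel hq.ne, rpow_one]
    _ ≤ pmean x q :=
        rpow_le_rpow_of_nonpos (mean_rpow_pos hN (fun i => hm.trans_le (hmx i)) q) hmean
          (one_div_nonpos.mpr hq.le)

lemma pmean_le_one_div_rpow_mul {N : ℕ} {x : Fin N → ℝ} (hx : ∀ i, 0 < x i) {q : ℝ}
    (hq : q < 0) (i : Fin N) : pmean x q ≤ (1 / N : ℝ) ^ (1 / q) * x i := by
  have hxi := rpow_pos_of_pos (hx i) q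
  have hN : (0 : ℝ) < N := by exact_mod_cast i.pos
  have hterm : (1 / N : ℝ) * x i ^ q ≤ (1 / N : ℝ) * ∑ j, x j ^ q := by
    gcongr
    exact single_le_sum (fun j _ => (rpow_pos_of_pos (hx j) q).le) (mem_univ i)
  calc pmean x q ≤ ((1 / N : ℝ) * x i ^ q) ^ (1 / q) :=
        rpow_le_rpow_of_nonpos (by positivity) hterm (one_div_nonpos.mpr hq.le)
    _ = (1 / N : ℝ) ^ (1 / q) * x i := by
        rw [mul_rpow (by positivity) hxi.le, ← rpow_mul (hx i).le, mul_one_div_cancel hq.ne,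
          rpow_one]

lemma one_div_rpow_one_div_neg_log_div_log {a b : ℝ} (ha : 0 < a) (hb : 1 < b) :
    (1 / b) ^ (1 / -(log b / log (1 / a))) = 1 / a := by
  have hlog : log b ≠ 0 := (log_pos hb).ne'
  rw [rpow_def_of_pos (by positivity), div_neg, one_div_div, log_div one_ne_zero
    (by positivity), log_one, zero_sub, neg_mul_neg, mul_div_cancel₀ _ hlog,
    exp_log (by positivity)]

/-- A maximizer of the `p₀`-mean objective, where `p₀ = -(ln N)/(ln (1/α))`, is an
`α`-approximate maximizer of the `p`-mean objective simultaneously for all `p ≤ p₀`. -/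
theorem maximizer_at_p0_approximates_all_smaller_p {N M : ℕ} (hN : 2 ≤ N) (hM : 1 ≤ M)
    (x : Fin M → Fin N → ℝ) (hx : ∀ j i, 0 < x j i)
    (α : ℝ) (hα : α ∈ Set.Ioo (0 : ℝ) 1)
    (p₀ : ℝ) (hp₀ : p₀ = -(Real.log N / Real.log (1 / α)))
    (j₀ : Fin M) (hj₀ : ∀ j, pmean (x j) p₀ ≤ pmean (x j₀) p₀)
    (p : ℝ) (hp : p ≤ p₀) :
    α * (Finset.univ.sup' ⟨⟨0, hM⟩, Finset.mem_univ _⟩ fun j => pmean (x j) p)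
      ≤ pmean (x j₀) p := by
  obtain ⟨hα0, hα1⟩ := hα
  have hN1 : (1 : ℝ) < N := by exact_mod_cast hN
  have hp₀_neg : p₀ < 0 := by
    rw [hp₀, neg_neg_iff_pos]
    exact div_pos (log_pos hN1) (log_pos (one_lt_one_div hα0 hα1))
  have hscale : (1 / N : ℝ) ^ (1 / p₀) = 1 / α := by
    rw [hp₀]; exact one_div_rpow_one_div_neg_log_div_log hα0 hN1
  have : Nonempty (Fin N) := ⟨⟨0, by omega⟩⟩
  obtain ⟨i₀, hi₀⟩ := Finite.exists_min (x j₀)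
  have hbound : ∀ j, α * pmean (x j) p ≤ pmean (x j₀) p := fun j => calc
    α * pmean (x j) p ≤ α * pmean (x j₀) p₀ := by
      gcongr
      exact (pmean_le_pmean_of_neg (by omega) (hx j) hp₀_neg hp).trans (hj₀ j)
    _ ≤ α * (1 / α * x j₀ i₀) := by
      gcongr
      exact hscale ▸ pmean_le_one_div_rpow_mul (hx j₀) hp₀_neg i₀
    _ = x j₀ i₀ := by field_simp
    _ ≤ pmean (x j₀) p := le_pmean_of_forall_le (by omega) (hx j₀ i₀) hi₀ (hp.trans_lt hp₀_neg)
  obtain ⟨j, -, hj⟩ := exists_mem_eq_sup' ⟨⟨0, hM⟩, mem_univ _⟩ fun j => pmean (x j) p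
  rw [hj]
  exact hbound j
end

section
/- Let N ≥ 1 be an integer, let 0 < L ≤ U be reals with condition number κ = U/L, and let x ∈ ℝ^N satisfy L ≤ x_i ≤ U for all i. Define g(p) = (1/p)·ln((1/N)·∑_{i=1}^N x_i^p) for nonzero real p. Then for every nonzero real p ≤ 1, the derivative of g at p is bounded: g'(p) ≤ κ·ln κ. -/
/-!
Put `y i = x i ^ p` and let `B` be their mean. Differentiating gives
`p² g'(p) = (∑ yᵢ log (yᵢ / B)) / ∑ yᵢ`, the relative entropy of the normalized `y` with
respect to the uniform distribution, and the `yᵢ` lie in `[m, m κ^|p|]`. For `|p| > 1` it is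
enough that `log (yᵢ / B) ≤ log κ^|p| = |p| log κ`. For `|p| ≤ 1`, `log u ≤ u - 1` bounds the
entropy by the chi-squared quantity `∑ (yᵢ - B)² / (B ∑ yᵢ)`, which the Bhatia–Davis inequality
bounds by `(M - B)(B - m) / B² ≤ (κ^|p| - 1) |p| log κ` with `M = m κ^|p|`; Bernoulli's
inequality `κ^|p| - 1 ≤ |p| κ` finishes.
-/

open Real Finset

theorem exists_rpow_mem_Icc {L U : ℝ} (hL : 0 < L) (hLU : L ≤ U) (p : ℝ) :
    ∃ m > 0, ∀ x ∈ Set.Icc L U, x ^ p ∈ Set.Icc m (m * (U / L) ^ |p|) := by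
  have hU : 0 < U := hL.trans_le hLU
  rcases le_or_gt 0 p with hp | hp
  · refine ⟨L ^ p, rpow_pos_of_pos hL p, fun x hx => ⟨rpow_le_rpow hL.le hx.1 hp, ?_⟩⟩
    rw [abs_of_nonneg hp, div_rpow hU.le hL.le, mul_div_cancel₀ _ (rpow_pos_of_pos hL p).ne']
    exact rpow_le_rpow (hL.trans_le hx.1).le hx.2 hp
  · refine ⟨U ^ p, rpow_pos_of_pos hU p, fun x hx =>
      ⟨rpow_le_rpow_of_nonpos (hL.trans_le hx.1) hx.2 hp.le, ?_⟩⟩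
    rw [abs_of_neg hp, rpow_neg (div_pos hU hL).le, div_rpow hU.le hL.le, inv_div,
      mul_div_cancel₀ _ (rpow_pos_of_pos hU p).ne']
    exact rpow_le_rpow_of_nonpos hL hx.1 hp.le

namespace LogPMean

variable {ι : Type*} [Fintype ι]

noncomputable def mean (y : ι → ℝ) : ℝ := (1 / Fintype.card ι : ℝ) * ∑ i, y i

section Nonempty

variable [Nonempty ι] (y : ι → ℝ)

theorem card_mul_mean : (Fintype.card ι : ℝ) * mean y = ∑ i, y i := by
  have : (Fintype.card ι : ℝ) ≠ 0 := by positivity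
  rw [mean]
  field_simp

theorem sum_sub_mean_eq_zero : ∑ i, (y i - mean y) = 0 := by
  rw [sum_sub_distrib, sum_const, card_univ, nsmul_eq_mul, card_mul_mean, sub_self]

variable {y} {m M : ℝ}

theorem mean_mem_Icc (hy : ∀ i, y i ∈ Set.Icc m M) : mean y ∈ Set.Icc m M := by
  have hcard : (0 : ℝ) < Fintype.card ι := by positivity
  constructor
  · refine le_of_mul_le_mul_left ?_ hcard
    rw [card_mul_mean, ← nsmul_eq_mul, ← card_univ]
    exact card_nsmul_le_sum _ _ _ fun i _ => (hy i).1
  · refine le_of_mul_le_mul_left ?_ hcard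
    rw [card_mul_mean, ← nsmul_eq_mul, ← card_univ]
    exact sum_le_card_nsmul _ _ _ fun i _ => (hy i).2

theorem mean_pos (hy : ∀ i, 0 < y i) : 0 < mean y := by
  unfold mean
  have : 0 < ∑ i, y i := sum_pos (fun i _ => hy i) univ_nonempty
  positivity

/-- Bhatia–Davis inequality. -/
theorem sum_sq_sub_mean_le (hy : ∀ i, y i ∈ Set.Icc m M) :
    ∑ i, (y i - mean y) ^ 2 ≤ Fintype.card ι * ((M - mean y) * (mean y - m)) := by
  have hsq : ∑ i, (y i - mean y) ^ 2 = ∑ i, (y i - mean y) * (y i - m) := by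
    have h (i : ι) :
        (y i - mean y) * (y i - m) = (y i - mean y) ^ 2 + (y i - mean y) * (mean y - m) := by
      ring
    rw [sum_congr rfl fun i _ => h i, sum_add_distrib, ← sum_mul, sum_sub_mean_eq_zero, zero_mul,
      add_zero]
  calc ∑ i, (y i - mean y) ^ 2 = ∑ i, (y i - mean y) * (y i - m) := hsq
    _ ≤ ∑ i, (M - mean y) * (y i - m) :=
      sum_le_sum fun i _ =>
        mul_le_mul_of_nonneg_right (by linarith [(hy i).2]) (by linarith [(hy i).1])
    _ = Fintype.card ι * ((M - mean y) * (mean y - m)) := by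
      rw [← mul_sum, sum_sub_distrib, ← card_mul_mean y, sum_const, card_univ, nsmul_eq_mul]
      ring

theorem sum_mul_log_div_mean_le_sum_sq_div_mean (hy : ∀ i, 0 < y i) :
    ∑ i, y i * log (y i / mean y) ≤ (∑ i, (y i - mean y) ^ 2) / mean y := by
  have hB := mean_pos hy
  calc ∑ i, y i * log (y i / mean y) ≤ ∑ i, y i * (y i / mean y - 1) :=
        sum_le_sum fun i _ => mul_le_mul_of_nonneg_left
          (log_le_sub_one_of_pos (div_pos (hy i) hB)) (hy i).le
    _ = ∑ i, (y i - mean y) * (y i - mean y) / mean y + ∑ i, (y i - mean y) := by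
        rw [← sum_add_distrib]
        exact sum_congr rfl fun i _ => by field_simp; ring
    _ = (∑ i, (y i - mean y) ^ 2) / mean y := by
        rw [sum_sub_mean_eq_zero, add_zero, sum_div]
        simp only [sq]

theorem sum_mul_log_div_mean_le_sum_mul_log (hm : 0 < m) (hy : ∀ i, y i ∈ Set.Icc m M) :
    ∑ i, y i * log (y i / mean y) ≤ (∑ i, y i) * log (M / m) := by
  have hB := mean_mem_Icc hy
  rw [sum_mul]
  refine sum_le_sum fun i _ => mul_le_mul_of_nonneg_left ?_ (hm.trans_le (hy i).1).le
  have hyi := hm.trans_le (hy i).1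
  exact log_le_log (div_pos hyi (hm.trans_le hB.1))
    (div_le_div₀ (hyi.le.trans (hy i).2) (hy i).2 hm hB.1)

theorem sum_mul_log_div_mean_le_sum_mul_sub_one_mul_log (hm : 0 < m)
    (hy : ∀ i, y i ∈ Set.Icc m M) :
    ∑ i, y i * log (y i / mean y) ≤ (∑ i, y i) * ((M / m - 1) * log (M / m)) := by
  obtain ⟨hmB, hBM⟩ := mean_mem_Icc hy
  have hB : 0 < mean y := hm.trans_le hmB
  have hupper : (M - mean y) / mean y ≤ M / m - 1 := by
    rw [sub_div, div_self hB.ne']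
    gcongr
    exact hm.le.trans (hmB.trans hBM)
  have hlower : (mean y - m) / mean y ≤ log (M / m) :=
    calc (mean y - m) / mean y = 1 - (mean y / m)⁻¹ := by field_simp
      _ ≤ log (mean y / m) := one_sub_inv_le_log_of_pos (div_pos hB hm)
      _ ≤ log (M / m) := by gcongr
  calc ∑ i, y i * log (y i / mean y) ≤ (∑ i, (y i - mean y) ^ 2) / mean y :=
        sum_mul_log_div_mean_le_sum_sq_div_mean fun i => hm.trans_le (hy i).1
    _ ≤ Fintype.card ι * ((M - mean y) * (mean y - m)) / mean y := by
        gcongr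
        exact sum_sq_sub_mean_le hy
    _ = (∑ i, y i) * ((M - mean y) / mean y * ((mean y - m) / mean y)) := by
        rw [← card_mul_mean]
        field_simp
    _ ≤ (∑ i, y i) * ((M / m - 1) * log (M / m)) := by
        have hS : 0 ≤ ∑ i, y i := sum_nonneg fun i _ => (hm.trans_le (hy i).1).le
        have hupper_nonneg := div_nonneg (sub_nonneg.2 hBM) hB.le
        gcongr
        exact hupper_nonneg.trans hupper

theorem sum_mul_log_div_mean_le_sum_mul_sq_mul {κ t : ℝ} (hm : 0 < m) (hκ : 1 ≤ κ)
    (ht : 0 ≤ t) (hy : ∀ i, y i ∈ Set.Icc m (m * κ ^ t)) :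
    ∑ i, y i * log (y i / mean y) ≤ (∑ i, y i) * (t ^ 2 * (κ * log κ)) := by
  have hratio : m * κ ^ t / m = κ ^ t := by field_simp
  have hlog : log (κ ^ t) = t * log κ := log_rpow (by linarith) t
  have hlogκ : 0 ≤ log κ := log_nonneg hκ
  have hS : 0 ≤ ∑ i, y i := sum_nonneg fun i _ => (hm.trans_le (hy i).1).le
  rcases le_or_gt t 1 with ht1 | ht1
  · refine (sum_mul_log_div_mean_le_sum_mul_sub_one_mul_log hm hy).trans ?_
    rw [hratio, hlog]
    have bernoulli : κ ^ t - 1 ≤ t * (κ - 1) := by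
      have := rpow_one_add_le_one_add_mul_self (s := κ - 1) (by linarith) ht ht1
      rw [add_sub_cancel] at this
      linarith
    have : (κ ^ t - 1) * (t * log κ) ≤ t ^ 2 * (κ * log κ) := by
      nlinarith [mul_le_mul_of_nonneg_right bernoulli (mul_nonneg ht hlogκ)]
    exact mul_le_mul_of_nonneg_left this hS
  · refine (sum_mul_log_div_mean_le_sum_mul_log hm hy).trans ?_
    rw [hratio, hlog]
    have : t * log κ ≤ t ^ 2 * (κ * log κ) := by
      nlinarith [mul_nonneg (mul_nonneg ht hlogκ) (by nlinarith : (0:ℝ) ≤ t * κ - 1)]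
    exact mul_le_mul_of_nonneg_left this hS

end Nonempty

theorem hasDerivAt_mean_rpow {x : ι → ℝ} (hx : ∀ i, 0 < x i) (p : ℝ) :
    HasDerivAt (fun q => mean fun i => x i ^ q) (mean fun i => x i ^ p * log (x i)) p :=
  (HasDerivAt.fun_sum fun i _ => (hasStrictDerivAt_const_rpow (hx i) p).hasDerivAt).const_mul _

theorem hasDerivAt_inv_mul_log_mean_rpow [Nonempty ι] {x : ι → ℝ} (hx : ∀ i, 0 < x i)
    {p : ℝ} (hp : p ≠ 0) :
    HasDerivAt (fun q => 1 / q * log (mean fun i => x i ^ q))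
      ((∑ i, x i ^ p * log (x i ^ p / mean fun i => x i ^ p)) / (p ^ 2 * ∑ i, x i ^ p)) p := by
  have hxp (i : ι) : 0 < x i ^ p := rpow_pos_of_pos (hx i) p
  have hB : 0 < mean fun i => x i ^ p := mean_pos hxp
  have hinv : HasDerivAt (fun q : ℝ => 1 / q) (-(p ^ 2)⁻¹) p := by
    simpa only [one_div] using hasDerivAt_inv hp
  refine (hinv.fun_mul ((hasDerivAt_mean_rpow hx p).log hB.ne')).congr_deriv ?_
  have hlog (i : ι) :
      log (x i ^ p / mean fun i => x i ^ p) = p * log (x i) - log (mean fun i => x i ^ p) := by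
    rw [log_div (hxp i).ne' hB.ne', log_rpow (hx i)]
  have hcard : (Fintype.card ι : ℝ) ≠ 0 := by positivity
  simp only [hlog, mul_sub, sum_sub_distrib, ← sum_mul, mul_left_comm _ p, ← mul_sum]
  rw [← card_mul_mean, ← card_mul_mean]
  field_simp
  ring

end LogPMean

open LogPMean

theorem log_pmean_deriv_bound_general {N : ℕ} (hN : 1 ≤ N) (L U : ℝ) (hL : 0 < L)
    (hLU : L ≤ U) (κ : ℝ) (hκ : κ = U / L) (x : Fin N → ℝ)
    (hx : ∀ i, x i ∈ Set.Icc L U) (g : ℝ → ℝ)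
    (hg : ∀ p : ℝ, g p = (1 / p) * Real.log ((1 / N : ℝ) * ∑ i, x i ^ p))
    (p : ℝ) (hp : p ≠ 0) :
    deriv g p ≤ κ * Real.log κ := by
  have : Nonempty (Fin N) := ⟨⟨0, hN⟩⟩
  have hxpos (i : Fin N) : 0 < x i := hL.trans_le (hx i).1
  have hg_eq : g = fun q => 1 / q * log (mean fun i => x i ^ q) := by
    funext q
    rw [hg, mean, Fintype.card_fin]
  obtain ⟨m, hm, hxp⟩ := exists_rpow_mem_Icc hL hLU p
  have hS : 0 < ∑ i, x i ^ p := sum_pos (fun i _ => rpow_pos_of_pos (hxpos i) p) univ_nonempty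
  rw [hg_eq, (hasDerivAt_inv_mul_log_mean_rpow hxpos hp).deriv, div_le_iff₀ (by positivity)]
  have key := sum_mul_log_div_mean_le_sum_mul_sq_mul hm ((one_le_div hL).2 hLU) (abs_nonneg p)
    fun i => hxp _ (hx i)
  rw [sq_abs, ← hκ] at key
  linarith

/-- Bound on the derivative of the log of the generalized `p`-mean: if the entries of
`x` lie in `[L, U]` with `0 < L ≤ U` and `κ = U/L`, then `g'(p) ≤ κ·ln κ` for every
nonzero `p ≤ 1`, where `g(p) = (1/p)·ln((1/N)·∑ xᵢ^p)`. -/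
theorem log_pmean_deriv_bound {N : ℕ} (hN : 1 ≤ N) (L U : ℝ) (hL : 0 < L)
    (hLU : L ≤ U) (κ : ℝ) (hκ : κ = U / L) (x : Fin N → ℝ)
    (hx : ∀ i, x i ∈ Set.Icc L U) (g : ℝ → ℝ)
    (hg : ∀ p : ℝ, g p = (1 / p) * Real.log ((1 / N : ℝ) * ∑ i, x i ^ p))
    (p : ℝ) (hp : p ≠ 0) (hp1 : p ≤ 1) :
    deriv g p ≤ κ * Real.log κ :=
  log_pmean_deriv_bound_general hN L U hL hLU κ hκ x hx g hg p hp
end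

section
/- Let N ≥ 1 be an integer, let 0 < L ≤ U be reals with κ = U/L, and let x ∈ ℝ^N satisfy L ≤ x_i ≤ U for all i. Then for all nonzero reals p < q ≤ 1, the log of the generalized p-mean is (κ·ln κ)-Lipschitz from p to q: ln f(x, q) − ln f(x, p) ≤ (q − p)·κ·ln κ, equivalently f(x, q) ≤ f(x, p)·exp((q − p)·κ·ln κ). -/
open Real BigOperators Finset

/-!
Put `y i = log (x i)` and let `K` be the cumulant generating function of `y` under the uniform
measure on the indices, so that `log f(x, s) = K s / s`. The second derivative `K'' s` is the
variance of `y` under an exponentially tilted measure, hence at most `(log κ / 2) ^ 2` by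
Popoviciu's inequality. So `(log κ) ^ 2 / 8 * s ^ 2 - K s` is convex and vanishes at `0`, and the
monotonicity of its chord slopes from `0` gives
`log f(x, q) - log f(x, p) ≤ (q - p) * (log κ) ^ 2 / 8 ≤ (q - p) * κ * log κ`.
-/

open MeasureTheory ProbabilityTheory

section BoundedCGF

variable {Ω : Type*} {m : MeasurableSpace Ω} {μ : Measure Ω} [IsProbabilityMeasure μ]
  {X : Ω → ℝ} {a b : ℝ}

lemma integrableExpSet_eq_univ_of_mem_Icc (hm : AEMeasurable X μ)
    (hb : ∀ᵐ ω ∂μ, X ω ∈ Set.Icc a b) : integrableExpSet X μ = Set.univ :=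
  Set.eq_univ_of_forall fun _ => integrable_exp_mul_of_mem_Icc hm hb

lemma iteratedDeriv_two_cgf_le_of_mem_Icc (hm : AEMeasurable X μ)
    (hb : ∀ᵐ ω ∂μ, X ω ∈ Set.Icc a b) (t : ℝ) :
    iteratedDeriv 2 (cgf X μ) t ≤ ((b - a) / 2) ^ 2 := by
  have ht : t ∈ interior (integrableExpSet X μ) := by
    simp [integrableExpSet_eq_univ_of_mem_Icc hm hb]
  have := isProbabilityMeasure_tilted (integrable_exp_mul_of_mem_Icc (t := t) hm hb)
  rw [← variance_tilted_mul ht]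
  exact variance_le_sq_of_bounded (tilted_absolutelyContinuous μ _ hb)
    (hm.mono_ac (tilted_absolutelyContinuous μ _))

lemma convexOn_sq_sub_cgf_of_mem_Icc (hm : AEMeasurable X μ)
    (hb : ∀ᵐ ω ∂μ, X ω ∈ Set.Icc a b) :
    ConvexOn ℝ Set.univ (fun t => ((b - a) / 2) ^ 2 / 2 * t ^ 2 - cgf X μ t) := by
  have hK : AnalyticOnNhd ℝ (cgf X μ) Set.univ := by
    simpa [integrableExpSet_eq_univ_of_mem_Icc hm hb] using
      (analyticOnNhd_cgf : AnalyticOnNhd ℝ (cgf X μ) _)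
  have hK' (t : ℝ) : HasDerivAt (cgf X μ) (deriv (cgf X μ) t) t :=
    (hK t trivial).differentiableAt.hasDerivAt
  have hK'' (t : ℝ) : HasDerivAt (deriv (cgf X μ)) (iteratedDeriv 2 (cgf X μ) t) t := by
    rw [iteratedDeriv_succ, iteratedDeriv_one]
    exact (hK.deriv t trivial).differentiableAt.hasDerivAt
  set c := ((b - a) / 2) ^ 2
  have hf' (t : ℝ) : HasDerivAt (fun t => c / 2 * t ^ 2 - cgf X μ t)
      (c * t - deriv (cgf X μ) t) t := by
    refine (((hasDerivAt_pow 2 t).const_mul (c / 2)).fun_sub (hK' t)).congr_deriv ?_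
    norm_num
    ring
  have hf'' (t : ℝ) : HasDerivAt (fun t => c * t - deriv (cgf X μ) t)
      (c - iteratedDeriv 2 (cgf X μ) t) t := by
    simpa using ((hasDerivAt_id t).const_mul c).fun_sub (hK'' t)
  refine convexOn_of_hasDerivWithinAt2_nonneg convex_univ
    (fun t _ => (hf' t).continuousAt.continuousWithinAt) (fun t _ => (hf' t).hasDerivWithinAt)
    (fun t _ => (hf'' t).hasDerivWithinAt) fun t _ => ?_
  simpa using iteratedDeriv_two_cgf_le_of_mem_Icc hm hb t

end BoundedCGF

lemma div_sub_div_le_of_convexOn_sq_sub {F : ℝ → ℝ} {c p q : ℝ}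
    (hF : ConvexOn ℝ Set.univ (fun t => c / 2 * t ^ 2 - F t)) (hF0 : F 0 = 0)
    (hp : p ≠ 0) (hq : q ≠ 0) (hpq : p ≤ q) :
    F q / q - F p / p ≤ c / 2 * (q - p) := by
  have hsec : (c / 2 * p ^ 2 - F p) / p ≤ (c / 2 * q ^ 2 - F q) / q := by
    simpa [hF0] using
      hF.secant_mono (Set.mem_univ 0) (Set.mem_univ p) (Set.mem_univ q) hp hq hpq
  rw [sub_div, sub_div, pow_two, pow_two, ← mul_assoc, ← mul_assoc,
    mul_div_cancel_right₀ _ hp, mul_div_cancel_right₀ _ hq] at hsec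
  linarith

lemma integral_uniformOn_univ {ι : Type*} [Fintype ι] [MeasurableSpace ι]
    [MeasurableSingletonClass ι] (f : ι → ℝ) :
    ∫ i, f i ∂(uniformOn Set.univ) = (1 / Fintype.card ι : ℝ) * ∑ i, f i := by
  rw [integral_fintype .of_finite, Finset.mul_sum]
  refine Finset.sum_congr rfl fun i _ => ?_
  simp [Measure.real, uniformOn_univ]

lemma cgf_uniformOn_univ {ι : Type*} [Fintype ι] [MeasurableSpace ι]
    [MeasurableSingletonClass ι] (y : ι → ℝ) (t : ℝ) :
    cgf y (uniformOn Set.univ) t = log ((1 / Fintype.card ι : ℝ) * ∑ i, exp (t * y i)) := by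
  rw [cgf, mgf, integral_uniformOn_univ]

lemma log_pmean_eq_cgf_div {N : ℕ} [NeZero N] {x : Fin N → ℝ} (hx : ∀ i, 0 < x i) (s : ℝ) :
    log (pmean x s) = cgf (fun i => log (x i)) (uniformOn Set.univ) s / s := by
  have hmean : 0 < (1 / N : ℝ) * ∑ i, x i ^ s :=
    mul_pos (by simp [Nat.pos_of_neZero])
      (Finset.sum_pos (fun i _ => rpow_pos_of_pos (hx i) s) univ_nonempty)
  rw [pmean, log_rpow hmean, cgf_uniformOn_univ, Fintype.card_fin]
  simp only [rpow_def_of_pos (hx _), mul_comm s]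
  ring

lemma sq_log_div_eight_le_mul_log {κ : ℝ} (hκ : 1 ≤ κ) : log κ ^ 2 / 8 ≤ κ * log κ := by
  have h0 := log_nonneg hκ
  have h1 := log_le_sub_one_of_pos (zero_lt_one.trans_le hκ)
  nlinarith

theorem log_pmean_lipschitz_general {N : ℕ} (hN : 1 ≤ N) (L U : ℝ) (hL : 0 < L)
    (hLU : L ≤ U) (κ : ℝ) (hκ : κ = U / L) (x : Fin N → ℝ)
    (hx : ∀ i, x i ∈ Set.Icc L U)
    (p q : ℝ) (hp : p ≠ 0) (hq : q ≠ 0) (hpq : p < q) :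
    Real.log (pmean x q) - Real.log (pmean x p) ≤ (q - p) * (κ * Real.log κ) := by
  have : NeZero N := ⟨by omega⟩
  have hxpos i : 0 < x i := hL.trans_le (hx i).1
  have hlogx : ∀ᵐ i ∂(uniformOn Set.univ : Measure (Fin N)),
      log (x i) ∈ Set.Icc (log L) (log U) :=
    ae_of_all _ fun i => ⟨log_le_log hL (hx i).1, log_le_log (hxpos i) (hx i).2⟩
  have hlogκ : log κ = log U - log L := by
    rw [hκ, log_div (hL.trans_le hLU).ne' hL.ne']
  have hκ1 : 1 ≤ κ := by rw [hκ]; exact (one_le_div hL).mpr hLU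
  rw [log_pmean_eq_cgf_div hxpos, log_pmean_eq_cgf_div hxpos]
  calc _ ≤ ((log U - log L) / 2) ^ 2 / 2 * (q - p) :=
        div_sub_div_le_of_convexOn_sq_sub
          (convexOn_sq_sub_cgf_of_mem_Icc (measurable_of_finite _).aemeasurable hlogx)
          cgf_zero hp hq hpq.le
    _ = (q - p) * (log κ ^ 2 / 8) := by rw [hlogκ]; ring
    _ ≤ (q - p) * (κ * log κ) := by
        gcongr
        exact sq_log_div_eight_le_mul_log hκ1

/-- The log of the generalized `p`-mean is `(κ·ln κ)`-Lipschitz in the exponent: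
for entries in `[L, U]` with `0 < L ≤ U` and `κ = U/L`, and nonzero `p < q ≤ 1`,
`ln f(x, q) − ln f(x, p) ≤ (q − p)·κ·ln κ`. -/
theorem log_pmean_lipschitz {N : ℕ} (hN : 1 ≤ N) (L U : ℝ) (hL : 0 < L)
    (hLU : L ≤ U) (κ : ℝ) (hκ : κ = U / L) (x : Fin N → ℝ)
    (hx : ∀ i, x i ∈ Set.Icc L U)
    (p q : ℝ) (hp : p ≠ 0) (hq : q ≠ 0) (hpq : p < q) (hq1 : q ≤ 1) :
    Real.log (pmean x q) - Real.log (pmean x p) ≤ (q - p) * (κ * Real.log κ) :=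
  log_pmean_lipschitz_general hN L U hL hLU κ hκ x hx p q hp hq hpq
end

section
/- Let N ≥ 1 be an integer, let x_1, …, x_M ∈ ℝ^N (M ≥ 1) be vectors with strictly positive entries, let y ∈ ℝ^N have strictly positive entries, and let α ∈ (0, 1). Suppose a, b are nonzero reals with a ≤ b ≤ 1 and f(y, a) ≥ α · max_{j ∈ {1,…,M}} f(x_j, b), where f(x, p) = ((1/N)·∑_{i=1}^N x_i^p)^{1/p}. Then for every nonzero real q with a ≤ q ≤ b, one has f(y, q) ≥ α · max_{j ∈ {1,…,M}} f(x_j, q); that is, y is an α-approximate maximizer of the q-mean objective for every q in the interval [a, b]. -/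
open Real BigOperators Finset

section aux
variable {N : ℕ}

lemma sum_w_eq_one (hN : 1 ≤ N) : ∑ _i : Fin N, (1 / N : ℝ) = 1 := by
  have h : (N : ℝ) ≠ 0 := by positivity
  simp [Finset.sum_const, Finset.card_univ]
  field_simp

lemma Sp_pos (hN : 1 ≤ N) (z : Fin N → ℝ) (hz : ∀ i, 0 < z i) (p : ℝ) :
    0 < (1 / N : ℝ) * ∑ i, z i ^ p := by
  have hN0 : (0 : ℝ) < N := by exact_mod_cast hN
  have hsum : 0 < ∑ i, z i ^ p :=
    Finset.sum_pos (fun i _ => Real.rpow_pos_of_pos (hz i) p) ⟨⟨0, hN⟩, mem_univ _⟩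
  positivity

lemma pmean_pos (hN : 1 ≤ N) (z : Fin N → ℝ) (hz : ∀ i, 0 < z i) (p : ℝ) :
    0 < pmean z p :=
  Real.rpow_pos_of_pos (Sp_pos hN z hz p) _

lemma Sp_as_wsum (z : Fin N → ℝ) (p : ℝ) :
    (1 / N : ℝ) * ∑ i, z i ^ p = ∑ i, (1 / N : ℝ) * z i ^ p := by
  rw [Finset.mul_sum]

-- geometric mean bounds
lemma geom_le_pmean (hN : 1 ≤ N) (z : Fin N → ℝ) (hz : ∀ i, 0 < z i) {q : ℝ} (hq : 0 < q) :
    (∏ i, z i ^ (1 / N : ℝ)) ≤ pmean z q := by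
  have hamgm := Real.geom_mean_le_arith_mean_weighted Finset.univ (fun _ => (1 / N : ℝ))
    (fun i => z i ^ q) (fun i _ => by positivity) (sum_w_eq_one hN)
    (fun i _ => (Real.rpow_pos_of_pos (hz i) q).le)
  have hprod : (∏ i, (z i ^ q) ^ (1 / N : ℝ)) = (∏ i, z i ^ (1 / N : ℝ)) ^ q := by
    rw [← Real.finset_prod_rpow _ _ (fun i _ => Real.rpow_nonneg (hz i).le _)]
    refine Finset.prod_congr rfl fun i _ => ?_
    rw [← Real.rpow_mul (hz i).le, ← Real.rpow_mul (hz i).le, mul_comm]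
  have key : (∏ i, z i ^ (1 / N : ℝ)) ^ q ≤ (1 / N : ℝ) * ∑ i, z i ^ q := by
    rw [← hprod, Sp_as_wsum]; exact hamgm
  have hG : 0 < ∏ i, z i ^ (1 / N : ℝ) :=
    Finset.prod_pos fun i _ => Real.rpow_pos_of_pos (hz i) _
  have := Real.rpow_le_rpow (by positivity) key (le_of_lt (by positivity : (0:ℝ) < 1/q))
  rwa [← Real.rpow_mul hG.le, mul_one_div, div_self hq.ne', Real.rpow_one] at this

lemma pmean_le_geom (hN : 1 ≤ N) (z : Fin N → ℝ) (hz : ∀ i, 0 < z i) {p : ℝ} (hp : p < 0) :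
    pmean z p ≤ ∏ i, z i ^ (1 / N : ℝ) := by
  have hamgm := Real.geom_mean_le_arith_mean_weighted Finset.univ (fun _ => (1 / N : ℝ))
    (fun i => z i ^ p) (fun i _ => by positivity) (sum_w_eq_one hN)
    (fun i _ => (Real.rpow_pos_of_pos (hz i) p).le)
  have hprod : (∏ i, (z i ^ p) ^ (1 / N : ℝ)) = (∏ i, z i ^ (1 / N : ℝ)) ^ p := by
    rw [← Real.finset_prod_rpow _ _ (fun i _ => Real.rpow_nonneg (hz i).le _)]
    refine Finset.prod_congr rfl fun i _ => ?_
    rw [← Real.rpow_mul (hz i).le, ← Real.rpow_mul (hz i).le, mul_comm]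
  have hG : 0 < ∏ i, z i ^ (1 / N : ℝ) :=
    Finset.prod_pos fun i _ => Real.rpow_pos_of_pos (hz i) _
  have key : (∏ i, z i ^ (1 / N : ℝ)) ^ p ≤ (1 / N : ℝ) * ∑ i, z i ^ p := by
    rw [← hprod, Sp_as_wsum]; exact hamgm
  have h2 := Real.rpow_le_rpow_of_nonpos (by positivity) key
    (le_of_lt (by exact one_div_neg.mpr hp : (1:ℝ)/p < 0))
  rwa [← Real.rpow_mul hG.le, mul_one_div, div_self hp.ne, Real.rpow_one] at h2

-- monotone case: 0 < p ≤ q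
lemma pmean_mono_pos (hN : 1 ≤ N) (z : Fin N → ℝ) (hz : ∀ i, 0 < z i)
    {p q : ℝ} (hp : 0 < p) (hpq : p ≤ q) : pmean z p ≤ pmean z q := by
  have hq : 0 < q := lt_of_lt_of_le hp hpq
  have hr : 1 ≤ q / p := (one_le_div hp).2 hpq
  have key := Real.rpow_arith_mean_le_arith_mean_rpow Finset.univ (fun _ => (1 / N : ℝ))
    (fun i => z i ^ p) (fun i _ => by positivity) (sum_w_eq_one hN)
    (fun i _ => (Real.rpow_pos_of_pos (hz i) p).le) hr
  have hrw : ∀ i : Fin N, (z i ^ p) ^ (q / p) = z i ^ q := by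
    intro i
    rw [← Real.rpow_mul (hz i).le, mul_div_cancel₀ _ hp.ne']
  simp only [hrw] at key
  rw [← Sp_as_wsum, ← Sp_as_wsum] at key
  have hSp := Sp_pos hN z hz p
  have h2 := Real.rpow_le_rpow (by positivity) key (le_of_lt (by positivity : (0:ℝ) < 1/q))
  rw [← Real.rpow_mul hSp.le] at h2
  have he : q / p * (1 / q) = 1 / p := by field_simp
  rw [he] at h2
  simpa [pmean] using h2

-- inverse trick
lemma pmean_inv (hN : 1 ≤ N) (z : Fin N → ℝ) (hz : ∀ i, 0 < z i) (p : ℝ) :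
    pmean (fun i => (z i)⁻¹) p = (pmean z (-p))⁻¹ := by
  unfold pmean
  have h1 : ∀ i : Fin N, (z i)⁻¹ ^ p = z i ^ (-p) := by
    intro i
    rw [Real.rpow_neg (hz i).le, Real.inv_rpow (hz i).le]
  simp only [h1]
  rw [← Real.rpow_neg (Sp_pos hN z hz (-p)).le]
  congr 1
  rw [div_neg, neg_neg]

lemma pmean_mono (hN : 1 ≤ N) (z : Fin N → ℝ) (hz : ∀ i, 0 < z i)
    {p q : ℝ} (hp : p ≠ 0) (hq : q ≠ 0) (hpq : p ≤ q) : pmean z p ≤ pmean z q := by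
  rcases lt_or_gt_of_ne hp with hpneg | hppos
  · rcases lt_or_gt_of_ne hq with hqneg | hqpos
    · -- p ≤ q < 0
      have h := pmean_mono_pos hN (fun i => (z i)⁻¹) (fun i => inv_pos.2 (hz i))
        (p := -q) (q := -p) (by linarith) (by linarith)
      rw [pmean_inv hN z hz, pmean_inv hN z hz, neg_neg, neg_neg] at h
      exact (inv_le_inv₀ (pmean_pos hN z hz q) (pmean_pos hN z hz p)).1 h
    · -- p < 0 < q
      exact (pmean_le_geom hN z hz hpneg).trans (geom_le_pmean hN z hz hqpos)
  · exact pmean_mono_pos hN z hz hppos hpq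

end aux


/-- Correctness invariant of the LineSearch procedure: if
`f(y, a) ≥ α · max_j f(x_j, b)` for nonzero `a ≤ b ≤ 1`, then `y` is an
`α`-approximate maximizer of the `q`-mean objective for every nonzero `q ∈ [a, b]`. -/
theorem line_search_invariant {N M : ℕ} (hN : 1 ≤ N) (hM : 1 ≤ M)
    (x : Fin M → Fin N → ℝ) (hx : ∀ j i, 0 < x j i)
    (y : Fin N → ℝ) (hy : ∀ i, 0 < y i)
    (α : ℝ) (hα : α ∈ Set.Ioo (0 : ℝ) 1)
    (a b : ℝ) (ha : a ≠ 0) (hb : b ≠ 0) (hab : a ≤ b) (hb1 : b ≤ 1)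
    (hmain : α * (Finset.univ.sup' ⟨⟨0, hM⟩, Finset.mem_univ _⟩ fun j => pmean (x j) b)
      ≤ pmean y a)
    (q : ℝ) (hq : q ≠ 0) (haq : a ≤ q) (hqb : q ≤ b) :
    α * (Finset.univ.sup' ⟨⟨0, hM⟩, Finset.mem_univ _⟩ fun j => pmean (x j) q)
      ≤ pmean y q := by
  have hsup : (Finset.univ.sup' ⟨⟨0, hM⟩, Finset.mem_univ _⟩ fun j => pmean (x j) q)
      ≤ Finset.univ.sup' ⟨⟨0, hM⟩, Finset.mem_univ _⟩ fun j => pmean (x j) b := by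
    apply Finset.sup'_le
    intro j _
    exact le_trans (pmean_mono hN (x j) (hx j) hq hb hqb)
      (Finset.le_sup' (fun j => pmean (x j) b) (mem_univ j))
  calc α * (Finset.univ.sup' ⟨⟨0, hM⟩, Finset.mem_univ _⟩ fun j => pmean (x j) q)
      ≤ α * (Finset.univ.sup' ⟨⟨0, hM⟩, Finset.mem_univ _⟩ fun j => pmean (x j) b) :=
        mul_le_mul_of_nonneg_left hsup hα.1.le
    _ ≤ pmean y a := hmain
    _ ≤ pmean y q := pmean_mono hN y hy ha hq haq
end
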